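/- arXiv:2008.11826 — 6 statements merged into one kernel-verified Lean document; each statement's English description precedes it below -/
import Mathlib

section
/- For any R, Q ∈ SO(3), one has the factorization 2I − R^T Q R^T Q − Q^T R Q^T R = (R − Q)^T (R + Q)(R + Q)^T (R − Q). -/
open Matrix

theorem SO3_factorization (R Q : Matrix (Fin 3) (Fin 3) ℝ)
    (hR : Rᵀ * R = 1) (hdetR : R.det = 1)
    (hQ : Qᵀ * Q = 1) (hdetQ : Q.det = 1) :
    2 • (1 : Matrix (Fin 3) (Fin 3) ℝ) - Rᵀ * Q * Rᵀ * Q - Qᵀ * R * Qᵀ * R =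
      (R - Q)ᵀ * (R + Q) * (R + Q)ᵀ * (R - Q) := by
  have hR' : R * Rᵀ = 1 := mul_eq_one_comm.mp hR
  have hQ' : Q * Qᵀ = 1 := mul_eq_one_comm.mp hQ
  simp only [transpose_sub, transpose_add, sub_mul, mul_sub, add_mul, mul_add,
    Matrix.mul_assoc, hR, hQ, two_smul, Matrix.mul_one, Matrix.one_mul]
  rw [show Rᵀ * (Q * (Qᵀ * R)) = Rᵀ * (Q * Qᵀ) * R by noncomm_ring,
      show Qᵀ * (R * (Rᵀ * Q)) = Qᵀ * (R * Rᵀ) * Q by noncomm_ring,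
      hR', hQ']
  simp only [Matrix.mul_one, Matrix.one_mul, hR, hQ]
  abel
end

section
/- For any R, Q ∈ SO(3), it holds that ‖Q − R Q^T R + R − Q R^T Q‖_F ≤ 2√3 · ‖R − Q‖_F². -/
/-!
Orthogonality of `R` and `Q` turns the left-hand side into the product
`(R - Q) * ((Rᵀ + Qᵀ) * (Q - R))`, so submultiplicativity of the Frobenius norm bounds it by
`‖R - Q‖² ‖Rᵀ + Qᵀ‖`, and `‖Rᵀ + Qᵀ‖ ≤ ‖R‖ + ‖Q‖ = 2√3` because every orthogonal `3 × 3`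
matrix has Frobenius norm `√3`.
-/

open Matrix

noncomputable def frob (M : Matrix (Fin 3) (Fin 3) ℝ) : ℝ :=
  Real.sqrt (∑ i, ∑ j, (M i j) ^ 2)

attribute [local instance] Matrix.frobeniusNormedAddCommGroup

lemma sub_mul_mul_add_sub_mul_mul_eq {α : Type*} [Ring α] {r r' q q' : α}
    (hr : r' * r = 1) (hr' : r * r' = 1) (hq : q' * q = 1) (hq' : q * q' = 1) :
    q - r * q' * r + r - q * r' * q = (r - q) * ((r' + q') * (q - r)) := by
  have hfactor : (r' + q') * (q - r) = r' * q - q' * r := by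
    rw [add_mul, mul_sub, mul_sub, hr, hq]
    abel
  calc q - r * q' * r + r - q * r' * q = r * r' * q - r * q' * r - q * r' * q + q * q' * r := by
        rw [hr', hq']; noncomm_ring
    _ = (r - q) * ((r' + q') * (q - r)) := by rw [hfactor]; noncomm_ring

lemma frobenius_norm_eq_sqrt_card_of_transpose_mul_self_eq_one {m n : Type*} [Fintype m]
    [Fintype n] [DecidableEq n] {R : Matrix m n ℝ} (hR : Rᵀ * R = 1) :
    ‖R‖ = √(Fintype.card n) := by
  have hcol : ∀ j, ∑ i, R i j ^ 2 = 1 := fun j => by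
    simpa [Matrix.mul_apply, sq] using congr_fun₂ hR j j
  rw [frobenius_norm_def, Finset.sum_comm, Real.sqrt_eq_rpow]
  simp_rw [Real.norm_eq_abs, Real.rpow_two, sq_abs, hcol]
  simp

lemma frob_eq_frobenius_norm (M : Matrix (Fin 3) (Fin 3) ℝ) : frob M = ‖M‖ := by
  rw [frob, frobenius_norm_def, Real.sqrt_eq_rpow]
  simp_rw [Real.norm_eq_abs, Real.rpow_two, sq_abs]

theorem SO3_frobenius_bound_general (R Q : Matrix (Fin 3) (Fin 3) ℝ)
    (hR : Rᵀ * R = 1)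
    (hQ : Qᵀ * Q = 1) :
    frob (Q - R * Qᵀ * R + R - Q * Rᵀ * Q) ≤ 2 * Real.sqrt 3 * frob (R - Q) ^ 2 := by
  have hsum : ‖Rᵀ + Qᵀ‖ ≤ 2 * √3 := calc
    ‖Rᵀ + Qᵀ‖ ≤ ‖Rᵀ‖ + ‖Qᵀ‖ := norm_add_le _ _
    _ = 2 * √3 := by
      rw [frobenius_norm_transpose, frobenius_norm_transpose,
        frobenius_norm_eq_sqrt_card_of_transpose_mul_self_eq_one hR,
        frobenius_norm_eq_sqrt_card_of_transpose_mul_self_eq_one hQ]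
      norm_num
      ring
  rw [sub_mul_mul_add_sub_mul_mul_eq hR (mul_eq_one_comm.mp hR) hQ (mul_eq_one_comm.mp hQ),
    frob_eq_frobenius_norm, frob_eq_frobenius_norm]
  calc ‖(R - Q) * ((Rᵀ + Qᵀ) * (Q - R))‖
      ≤ ‖R - Q‖ * (‖Rᵀ + Qᵀ‖ * ‖Q - R‖) :=
        (frobenius_norm_mul _ _).trans (by gcongr; exact frobenius_norm_mul _ _)
    _ ≤ ‖R - Q‖ * (2 * √3 * ‖R - Q‖) := by rw [norm_sub_rev Q R]; gcongr
    _ = 2 * √3 * ‖R - Q‖ ^ 2 := by ring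

theorem SO3_frobenius_bound (R Q : Matrix (Fin 3) (Fin 3) ℝ)
    (hR : Rᵀ * R = 1) (hdetR : R.det = 1)
    (hQ : Qᵀ * Q = 1) (hdetQ : Q.det = 1) :
    frob (Q - R * Qᵀ * R + R - Q * Rᵀ * Q) ≤ 2 * Real.sqrt 3 * frob (R - Q) ^ 2 :=
  SO3_frobenius_bound_general R Q hR hQ
end

section
/- Let R ∈ SO(3) with rotation angle θ := arccos((tr R − 1)/2) satisfying 0 ≤ θ < π/2, and let V ∈ ℝ^{3×3} be arbitrary. Then tr(R V V^T) ≥ cos θ · ‖V‖_F². -/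
open Matrix

lemma adj_fin_three_eq (A : Matrix (Fin 3) (Fin 3) ℝ) :
    A.adjugate = A*A - A.trace • A + (((A.trace)^2 - (A*A).trace)/2) • 1 := by
  ext i j
  fin_cases i <;> fin_cases j <;>
    simp [adjugate_fin_three, trace_fin_three, mul_apply, Fin.sum_univ_three,
      Matrix.one_apply] <;> ring

lemma trace_mul_transpose_self_nonneg (P : Matrix (Fin 3) (Fin 3) ℝ) :
    0 ≤ (P * Pᵀ).trace := by
  have : (P * Pᵀ).trace = ∑ i, ∑ j, (P i j)^2 := by
    simp [trace, mul_apply, diag, sq]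
  rw [this]
  positivity

theorem trace_lower_bound (R : Matrix (Fin 3) (Fin 3) ℝ)
    (hR : Rᵀ * R = 1) (hdet : R.det = 1)
    (V : Matrix (Fin 3) (Fin 3) ℝ)
    (hθ : Real.arccos ((R.trace - 1) / 2) < Real.pi / 2) :
    (R * V * Vᵀ).trace ≥ Real.cos (Real.arccos ((R.trace - 1) / 2)) * frob V ^ 2 := by
  set t := R.trace with ht
  have hRRt : R * Rᵀ = 1 := mul_eq_one_comm.mp hR
  -- adjugate R = Rᵀ
  have hadj : R.adjugate = Rᵀ := by
    have h := Matrix.mul_adjugate R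
    rw [hdet, one_smul] at h
    calc R.adjugate = 1 * R.adjugate := (one_mul _).symm
      _ = Rᵀ * (R * R.adjugate) := by rw [← hR, mul_assoc]
      _ = Rᵀ := by rw [h, mul_one]
  -- key identity Rᵀ = R² - tR + e•1
  set e : ℝ := ((t)^2 - (R*R).trace)/2 with he
  have hK0 : Rᵀ = R*R - t • R + e • 1 := by
    rw [← hadj, adj_fin_three_eq]
  -- taking traces shows e = t
  have hetr : e = t := by
    have h1 := congrArg Matrix.trace hK0
    rw [trace_transpose, trace_add, trace_sub, trace_smul, trace_smul, trace_one] at h1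
    have h2 : (R*R).trace = t^2 - 2*e := by rw [he]; ring
    rw [h2] at h1
    simp only [smul_eq_mul, Fintype.card_fin, Nat.cast_ofNat] at h1
    nlinarith [h1]
  rw [hetr] at hK0
  have hRR : R * R = t • R - t • 1 + Rᵀ := by rw [hK0]; abel
  have hTT : Rᵀ * Rᵀ = t • Rᵀ - t • 1 + R := by
    have := congrArg Matrix.transpose hRR
    simpa [transpose_mul, transpose_smul, transpose_one] using this
  -- the PSD matrix N
  set N : Matrix (Fin 3) (Fin 3) ℝ := R + Rᵀ + (1 - t) • 1 with hN
  have hNsymm : Nᵀ = N := by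
    rw [hN, transpose_add, transpose_add, transpose_transpose, transpose_smul, transpose_one]
    abel
  have hNN : N * N = (3 - t) • N := by
    rw [hN]
    simp only [add_mul, mul_add, smul_mul_assoc, mul_smul_comm, one_mul, mul_one,
      smul_smul, hRR, hTT, hR, hRRt]
    module
  -- trace bound : t ≤ 3
  have hdiag : ∀ i, R i i ≤ 1 := by
    intro i
    have h : ∑ k, (R k i)^2 = 1 := by
      have h := congrFun (congrFun hR i) i
      simpa [mul_apply, transpose_apply, sq] using h
    have h2 : (R i i)^2 ≤ 1 :=
      h ▸ Finset.single_le_sum (fun k _ => sq_nonneg (R k i)) (Finset.mem_univ i)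
    nlinarith [h2]
  have ht3 : t ≤ 3 := by
    have h0 := hdiag 0; have h1 := hdiag 1; have h2 := hdiag 2
    rw [ht, trace_fin_three]; linarith
  -- positivity of tr(N V Vᵀ)
  have hpos : 0 ≤ (N * V * Vᵀ).trace := by
    rcases eq_or_lt_of_le ht3 with h3 | h3
    · -- t = 3 : N = 0
      have hzero : N = 0 := by
        have h0 : (N * Nᵀ).trace = 0 := by
          rw [hNsymm, hNN, ← h3]
          simp
        have hsum : (∑ i, ∑ j, (N i j)^2) = 0 := by
          rw [← h0]; simp [trace, mul_apply, diag, sq]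
        ext i j
        have hmem : ∀ i ∈ (Finset.univ : Finset (Fin 3)),
            (0:ℝ) ≤ ∑ j, (N i j)^2 := by
          intro i _; positivity
        have h1 := (Finset.sum_eq_zero_iff_of_nonneg hmem).mp hsum i (Finset.mem_univ i)
        have hmem2 : ∀ j ∈ (Finset.univ : Finset (Fin 3)), (0:ℝ) ≤ (N i j)^2 := by
          intro j _; positivity
        have h2 := (Finset.sum_eq_zero_iff_of_nonneg hmem2).mp h1 j (Finset.mem_univ j)
        simpa using pow_eq_zero_iff (n := 2) (by norm_num) |>.mp h2
      simp [hzero]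
    · -- t < 3
      have e0 : (N * V * Vᵀ).trace = (Vᵀ * (N * V)).trace := trace_mul_comm (N*V) Vᵀ
      have e1 : ((N*V) * (N*V)ᵀ).trace = (Vᵀ * (N * (N * V))).trace := by
        rw [transpose_mul, hNsymm, trace_mul_comm]
        congr 1
        noncomm_ring
      have e2 : N * (N * V) = (3-t) • (N * V) := by rw [← mul_assoc, hNN, smul_mul_assoc]
      have hmul : (3 - t) * (N * V * Vᵀ).trace = ((N * V) * (N * V)ᵀ).trace := by
        rw [e1, e2, mul_smul_comm, trace_smul, smul_eq_mul, e0]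
      have h4 : 0 ≤ (3 - t) * (N * V * Vᵀ).trace :=
        hmul ▸ trace_mul_transpose_self_nonneg (N*V)
      nlinarith [h4, h3]
  -- unfold N in the trace
  have htrT : (Rᵀ * V * Vᵀ).trace = (R * V * Vᵀ).trace := by
    have : (Rᵀ * V * Vᵀ).trace = ((Rᵀ * V * Vᵀ)ᵀ).trace := (trace_transpose _).symm
    rw [this, transpose_mul, transpose_mul, transpose_transpose, transpose_transpose,
      ← mul_assoc, trace_mul_comm]
    rw [mul_assoc]
  have htrV : ((1:Matrix (Fin 3) (Fin 3) ℝ) * V * Vᵀ).trace = ∑ i, ∑ j, (V i j)^2 := by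
    rw [one_mul]
    simp [trace, mul_apply, diag, sq]
  have hexp : (N * V * Vᵀ).trace
      = 2 * (R * V * Vᵀ).trace + (1 - t) * (∑ i, ∑ j, (V i j)^2) := by
    rw [hN]
    simp only [add_mul, smul_mul_assoc, trace_add, trace_smul, smul_eq_mul]
    rw [htrT, htrV]
    ring
  -- arccos facts
  have hcpos : 0 < (t - 1) / 2 := Real.arccos_lt_pi_div_two.mp hθ
  have hcos : Real.cos (Real.arccos ((t - 1) / 2)) = (t - 1) / 2 :=
    Real.cos_arccos (by linarith) (by linarith)
  have hfrob : frob V ^ 2 = ∑ i, ∑ j, (V i j)^2 := by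
    rw [frob, Real.sq_sqrt (by positivity)]
  rw [hcos, hfrob]
  nlinarith [hpos, hexp]
end

section
/- For any three rotation matrices R_i, R_j, R_k ∈ SO(3), one has the identity tr(R_k^T R_j − R_i^T R_k R_i^T R_j) = 2 tr((R_k − R_i)^T R_j) + ‖R_i − R_k‖_F² − (1/2)‖(R_i − R_k)^T (R_i − R_j)‖_F². -/
open Matrix

lemma frob_sq (M : Matrix (Fin 3) (Fin 3) ℝ) : frob M ^ 2 = (Mᵀ * M).trace := by
  rw [frob, Real.sq_sqrt (by positivity)]
  simp [Matrix.trace, Matrix.diag, Matrix.mul_apply, Matrix.transpose_apply, pow_two]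
  rw [Finset.sum_comm]

theorem trace_identity_three_rotations (Ri Rj Rk : Matrix (Fin 3) (Fin 3) ℝ)
    (hRi : Riᵀ * Ri = 1) (hdetRi : Ri.det = 1)
    (hRj : Rjᵀ * Rj = 1) (hdetRj : Rj.det = 1)
    (hRk : Rkᵀ * Rk = 1) (hdetRk : Rk.det = 1) :
    (Rkᵀ * Rj - Riᵀ * Rk * Riᵀ * Rj).trace =
      2 * ((Rk - Ri)ᵀ * Rj).trace + frob (Ri - Rk) ^ 2
        - (1 / 2) * frob ((Ri - Rk)ᵀ * (Ri - Rj)) ^ 2 := by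
  have hRi' : Ri * Riᵀ = 1 := mul_eq_one_comm.mp hRi
  have hRj' : Rj * Rjᵀ = 1 := mul_eq_one_comm.mp hRj
  have hRk' : Rk * Rkᵀ = 1 := mul_eq_one_comm.mp hRk
  have ci : ∀ M : Matrix (Fin 3) (Fin 3) ℝ, Riᵀ * (Ri * M) = M := fun M => by
    rw [← Matrix.mul_assoc, hRi, Matrix.one_mul]
  have ci' : ∀ M : Matrix (Fin 3) (Fin 3) ℝ, Ri * (Riᵀ * M) = M := fun M => by
    rw [← Matrix.mul_assoc, hRi', Matrix.one_mul]
  have cj : ∀ M : Matrix (Fin 3) (Fin 3) ℝ, Rjᵀ * (Rj * M) = M := fun M => by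
    rw [← Matrix.mul_assoc, hRj, Matrix.one_mul]
  have cj' : ∀ M : Matrix (Fin 3) (Fin 3) ℝ, Rj * (Rjᵀ * M) = M := fun M => by
    rw [← Matrix.mul_assoc, hRj', Matrix.one_mul]
  have ck : ∀ M : Matrix (Fin 3) (Fin 3) ℝ, Rkᵀ * (Rk * M) = M := fun M => by
    rw [← Matrix.mul_assoc, hRk, Matrix.one_mul]
  have ck' : ∀ M : Matrix (Fin 3) (Fin 3) ℝ, Rk * (Rkᵀ * M) = M := fun M => by
    rw [← Matrix.mul_assoc, hRk', Matrix.one_mul]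
  have t1 : (Rjᵀ * Ri).trace = (Riᵀ * Rj).trace := by
    rw [← Matrix.trace_transpose (Riᵀ * Rj)]; simp
  have t2 : (Rjᵀ * Rk).trace = (Rkᵀ * Rj).trace := by
    rw [← Matrix.trace_transpose (Rkᵀ * Rj)]; simp
  have t3 : (Rkᵀ * Ri).trace = (Riᵀ * Rk).trace := by
    rw [← Matrix.trace_transpose (Riᵀ * Rk)]; simp
  have t4 : (Rjᵀ * (Ri * (Rkᵀ * Ri))).trace = (Riᵀ * (Rk * (Riᵀ * Rj))).trace := by
    rw [← Matrix.trace_transpose (Rjᵀ * (Ri * (Rkᵀ * Ri)))]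
    simp [Matrix.mul_assoc]
  have t5 : (Rjᵀ * (Rk * (Riᵀ * Rj))).trace = (Riᵀ * Rk).trace := by
    rw [Matrix.trace_mul_comm]
    simp only [Matrix.mul_assoc, hRj', Matrix.mul_one]
    rw [Matrix.trace_mul_comm]
  have t6 : (Rjᵀ * (Ri * (Rkᵀ * Rj))).trace = (Riᵀ * Rk).trace := by
    rw [Matrix.trace_mul_comm]
    simp only [Matrix.mul_assoc, hRj', Matrix.mul_one]
    rw [Matrix.trace_mul_comm, t3]
  have f1 : ((Ri - Rk)ᵀ * (Ri - Rk)).trace = 6 - 2 * (Riᵀ * Rk).trace := by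
    simp only [transpose_sub, Matrix.sub_mul, Matrix.mul_sub, hRi, hRk,
      Matrix.trace_sub, Matrix.trace_one, t3]
    norm_num; ring
  have f2 : (((Ri - Rk)ᵀ * (Ri - Rj))ᵀ * ((Ri - Rk)ᵀ * (Ri - Rj))).trace =
      12 - 4 * (Riᵀ * Rk).trace - 4 * (Riᵀ * Rj).trace + 2 * (Rkᵀ * Rj).trace
        + 2 * (Riᵀ * (Rk * (Riᵀ * Rj))).trace := by
    simp only [transpose_sub, transpose_mul, transpose_transpose, Matrix.sub_mul,
      Matrix.mul_sub, Matrix.trace_sub, Matrix.trace_add, Matrix.mul_assoc,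
      ci, ci', cj, cj', ck, ck', hRi, hRj, hRk, hRi', hRj', hRk',
      Matrix.trace_one, Matrix.mul_one, Matrix.one_mul, Matrix.transpose_one,
      t1, t2, t3, t4, t5, t6, Fintype.card_fin]
    norm_num; ring
  rw [frob_sq, frob_sq, f1, f2]
  simp only [transpose_sub, Matrix.sub_mul, Matrix.trace_sub, Matrix.mul_assoc]
  ring
end

section
/- For any three rotation matrices R_i, R_j, R_k ∈ SO(3), the inequality tr(R_k^T R_j − R_i^T R_k R_i^T R_j) ≥ 2(tr(R_k^T R_j) − tr(R_i^T R_j)) + ‖R_i − R_k‖_F² · (tr(R_i^T R_j) − 2) holds. -/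
open Matrix

private lemma sumSq_eq_trace (M : Matrix (Fin 3) (Fin 3) ℝ) :
    ∑ i, ∑ j, (M i j) ^ 2 = (Mᵀ * M).trace := by
  simp only [Matrix.trace, Matrix.diag, Matrix.mul_apply, Matrix.transpose_apply, sq]
  exact Finset.sum_comm

private lemma cs_bound (P Q : Matrix (Fin 3) (Fin 3) ℝ) :
    ∑ i, ∑ j, ((Pᵀ * Q) i j) ^ 2 ≤ (∑ i, ∑ j, (P i j)^2) * (∑ i, ∑ j, (Q i j)^2) := by
  have h : ∀ i j : Fin 3, ((Pᵀ * Q) i j)^2 ≤ (∑ l, (P l i)^2) * (∑ l, (Q l j)^2) := by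
    intro i j
    simpa [Matrix.mul_apply, Matrix.transpose_apply] using
      Finset.sum_mul_sq_le_sq_mul_sq Finset.univ (fun l => P l i) (fun l => Q l j)
  calc ∑ i, ∑ j, ((Pᵀ * Q) i j) ^ 2
      ≤ ∑ i, ∑ j, (∑ l, (P l i)^2) * (∑ l, (Q l j)^2) :=
        Finset.sum_le_sum fun i _ => Finset.sum_le_sum fun j _ => h i j
    _ = (∑ i, ∑ l, (P l i)^2) * (∑ j, ∑ l, (Q l j)^2) := by
        rw [← Finset.sum_mul_sum]
    _ = (∑ i, ∑ j, (P i j)^2) * (∑ i, ∑ j, (Q i j)^2) := by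
        rw [Finset.sum_comm (f := fun l i => (P l i)^2),
          Finset.sum_comm (f := fun l j => (Q l j)^2)]

set_option maxHeartbeats 2000000 in
private lemma multilin (Ri Rj Rk : Matrix (Fin 3) (Fin 3) ℝ) :
    (((1+1 : Matrix (Fin 3) (Fin 3) ℝ) - Ri*Rkᵀ - Rk*Riᵀ)
      * ((1+1) - Ri*Rjᵀ - Rj*Riᵀ)).trace
    = 12 - 4*(Riᵀ*Rk).trace - 4*(Riᵀ*Rj).trace
      + 2*(Riᵀ*Rk*Riᵀ*Rj).trace
      + (Ri * Rkᵀ * (Rj * Riᵀ)).trace + (Rk * Riᵀ * (Ri * Rjᵀ)).trace := by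
  simp [Matrix.trace, Matrix.mul_apply, Fin.sum_univ_three, Matrix.one_apply]
  ring

private lemma tr_two_sub (A B : Matrix (Fin 3) (Fin 3) ℝ) :
    ((1+1 : Matrix (Fin 3) (Fin 3) ℝ) - Aᵀ*B - Bᵀ*A).trace
      = 6 - 2*(Aᵀ*B).trace := by
  simp [Matrix.trace, Matrix.mul_apply, Fin.sum_univ_three, Matrix.one_apply]
  ring

theorem trace_inequality_three_rotations (Ri Rj Rk : Matrix (Fin 3) (Fin 3) ℝ)
    (hRi : Riᵀ * Ri = 1) (hdetRi : Ri.det = 1)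
    (hRj : Rjᵀ * Rj = 1) (hdetRj : Rj.det = 1)
    (hRk : Rkᵀ * Rk = 1) (hdetRk : Rk.det = 1) :
    (Rkᵀ * Rj - Riᵀ * Rk * Riᵀ * Rj).trace ≥
      2 * ((Rkᵀ * Rj).trace - (Riᵀ * Rj).trace)
        + frob (Ri - Rk) ^ 2 * ((Riᵀ * Rj).trace - 2) := by
  have hRi' : Ri * Riᵀ = 1 := mul_eq_one_comm.mp hRi
  have hRk' : Rk * Rkᵀ = 1 := mul_eq_one_comm.mp hRk
  have hRj' : Rj * Rjᵀ = 1 := mul_eq_one_comm.mp hRj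
  set a := (Riᵀ * Rk).trace with ha
  set b := (Riᵀ * Rj).trace with hb
  set c := (Rkᵀ * Rj).trace with hc
  set t := (Riᵀ * Rk * Riᵀ * Rj).trace with ht
  set P := Ri - Rk with hP
  set Q := Ri - Rj with hQ
  -- P*Pᵀ and Q*Qᵀ
  have hPP : P * Pᵀ = (1+1) - Ri*Rkᵀ - Rk*Riᵀ := by
    rw [hP, transpose_sub, Matrix.sub_mul, Matrix.mul_sub, Matrix.mul_sub, hRi', hRk']
    abel
  have hQQ : Q * Qᵀ = (1+1) - Ri*Rjᵀ - Rj*Riᵀ := by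
    rw [hQ, transpose_sub, Matrix.sub_mul, Matrix.mul_sub, Matrix.mul_sub, hRi', hRj']
    abel
  -- PᵀP and QᵀQ
  have hPtP : Pᵀ * P = (1+1) - Riᵀ*Rk - Rkᵀ*Ri := by
    rw [hP, transpose_sub, Matrix.sub_mul, Matrix.mul_sub, Matrix.mul_sub, hRi, hRk]
    abel
  have hQtQ : Qᵀ * Q = (1+1) - Riᵀ*Rj - Rjᵀ*Ri := by
    rw [hQ, transpose_sub, Matrix.sub_mul, Matrix.mul_sub, Matrix.mul_sub, hRi, hRj]
    abel
  have hsumP : ∑ i, ∑ j, (P i j)^2 = 6 - 2*a := by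
    rw [sumSq_eq_trace, hPtP, tr_two_sub]
  have hsumQ : ∑ i, ∑ j, (Q i j)^2 = 6 - 2*b := by
    rw [sumSq_eq_trace, hQtQ, tr_two_sub]
  -- the two orthogonality trace reductions
  have tr_sym : ∀ A B : Matrix (Fin 3) (Fin 3) ℝ, (Aᵀ * B).trace = (Bᵀ * A).trace := by
    intro A B
    rw [← Matrix.trace_transpose (Aᵀ * B), Matrix.transpose_mul, Matrix.transpose_transpose]
  have f2 : (Ri * Rkᵀ * (Rj * Riᵀ)).trace = c := by
    have e : Ri * Rkᵀ * (Rj * Riᵀ) = Ri * (Rkᵀ * Rj) * Riᵀ := by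
      simp only [Matrix.mul_assoc]
    rw [e, Matrix.trace_mul_comm, ← Matrix.mul_assoc, ← Matrix.mul_assoc, hRi,
      Matrix.one_mul, hc]
  have f3 : (Rk * Riᵀ * (Ri * Rjᵀ)).trace = c := by
    have e : Rk * Riᵀ * (Ri * Rjᵀ) = Rk * (Riᵀ * Ri * Rjᵀ) := by
      simp only [Matrix.mul_assoc]
    rw [e, hRi, Matrix.one_mul, Matrix.trace_mul_comm, hc]
    exact tr_sym Rj Rk
  -- S := squared Frobenius norm of Pᵀ * Q
  have hS_eq : ∑ i, ∑ j, ((Pᵀ * Q) i j)^2 = 12 - 4*a - 4*b + 2*t + 2*c := by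
    rw [sumSq_eq_trace]
    have h1 : (Pᵀ * Q)ᵀ * (Pᵀ * Q) = Qᵀ * ((P * Pᵀ) * Q) := by
      rw [transpose_mul, transpose_transpose]
      simp only [Matrix.mul_assoc]
    rw [h1, Matrix.trace_mul_comm, Matrix.mul_assoc, hPP, hQQ, multilin, f2, f3,
      ← ha, ← hb, ← ht]
    ring
  have hS_le : ∑ i, ∑ j, ((Pᵀ * Q) i j)^2 ≤ (6 - 2*a) * (6 - 2*b) := by
    rw [← hsumP, ← hsumQ]; exact cs_bound P Q
  -- frobenius norm squared
  have hfrob : frob (Ri - Rk) ^ 2 = 6 - 2*a := by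
    rw [frob, Real.sq_sqrt, ← hP, hsumP]
    positivity
  -- left hand side
  have hlhs : (Rkᵀ * Rj - Riᵀ * Rk * Riᵀ * Rj).trace = c - t := by
    rw [Matrix.trace_sub, ← hc, ← ht]
  rw [hlhs, hfrob, ge_iff_le]
  nlinarith [hS_le, hS_eq]
end

section
/- Let c > 0, N > 0 and let T: [0,∞) → ℝ be a differentiable function with T(0) ∈ (2, 3], T(t) ≤ 3 for all t, and T'(t) ≥ −(4c/N)(T(t) − 2)(T(t) − 3) for all t ≥ 0. Then for all t ≥ 0, T(t) ≥ 3 + (T(0) − 3) e^{−4ct/N} / ((T(0) − 2) − (T(0) − 3) e^{−4ct/N}); in particular T(t) ∈ (2, 3] for all t and T(t) → 3 exponentially fast as t → ∞. -/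
open Real Set

/-!
With `x = T - 2` and `κ = 4c/N` the hypothesis is the logistic inequality `x' ≥ κ x (1 - x)`.
The logistic equation is linearised by `1/x`, which suggests the quantity
`g = x₀ (1 - x) - (1 - x₀) e^{-κt} x`: it vanishes at `0` and satisfies `g' ≤ -κ x g`, so a
comparison argument gives `g ≤ 0` on `[0, ∞)`. This single inequality already forces `x > 0`,
and solving it for `x` gives the explicit lower bound and the exponential convergence to `1`.
-/

theorem image_nonpos_of_deriv_right_le_const_mul {f f' : ℝ → ℝ} {a b M : ℝ}
    (hf : ContinuousOn f (Icc a b)) (hf' : ∀ x ∈ Ico a b, HasDerivWithinAt f (f' x) (Ici x) x)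
    (ha : f a ≤ 0) (bound : ∀ x ∈ Ico a b, 0 < f x → f' x ≤ M * f x) :
    ∀ ⦃x⦄, x ∈ Icc a b → f x ≤ 0 := by
  intro x hx
  set E := exp ((M + 1) * (x - a))
  -- `f` can only touch the positive barrier `ε e^{(M+1)(y-a)}` where `f > 0`, and grows slower there
  have barrier : ∀ ε > 0, f x ≤ ε * E := by
    intro ε hε
    refine image_le_of_deriv_right_lt_deriv_boundary hf hf'
      (B := fun y => ε * exp ((M + 1) * (y - a)))
      (B' := fun y => ε * (exp ((M + 1) * (y - a)) * ((M + 1) * 1))) ?_ ?_ ?_ hx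
    · simpa using ha.trans hε.le
    · exact fun y => ((((hasDerivAt_id' y).sub_const a).const_mul (M + 1)).exp).const_mul ε
    · intro y hy hfy
      have hpos : 0 < f y := hfy ▸ by positivity
      calc f' y ≤ M * f y := bound y hy hpos
        _ < (M + 1) * f y := by linarith
        _ = _ := by rw [hfy]; ring
  by_contra! hpos
  have hE : 0 < E := exp_pos _
  have := barrier (f x / (2 * E)) (by positivity)
  rw [div_mul_eq_mul_div, mul_div_mul_right _ _ hE.ne'] at this
  linarith

theorem image_nonpos_of_deriv_right_le_mul {f f' K : ℝ → ℝ} {a b : ℝ}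
    (hf : ContinuousOn f (Icc a b)) (hf' : ∀ x ∈ Ico a b, HasDerivWithinAt f (f' x) (Ici x) x)
    (hK : ContinuousOn K (Icc a b)) (ha : f a ≤ 0) (bound : ∀ x ∈ Ico a b, f' x ≤ K x * f x) :
    ∀ ⦃x⦄, x ∈ Icc a b → f x ≤ 0 := by
  obtain ⟨M, hM⟩ := isCompact_Icc.bddAbove_image hK
  refine image_nonpos_of_deriv_right_le_const_mul (M := M) hf hf' ha fun x hx hfx => ?_
  calc f' x ≤ K x * f x := bound x hx
    _ ≤ M * f x := mul_le_mul_of_nonneg_right (hM ⟨x, Ico_subset_Icc_self hx, rfl⟩) hfx.le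

theorem logistic_comparison {κ : ℝ} {x x' : ℝ → ℝ} (hx : ∀ t ≥ 0, HasDerivAt x (x' t) t)
    (h0 : x 0 ∈ Icc (0 : ℝ) 1) (hlog : ∀ t ≥ 0, κ * x t * (1 - x t) ≤ x' t) {t : ℝ} (ht : 0 ≤ t) :
    x 0 * (1 - x t) ≤ (1 - x 0) * exp (-κ * t) * x t := by
  set g := fun s => x 0 * (1 - x s) - (1 - x 0) * exp (-κ * s) * x s
  set g' := fun s => x 0 * -x' s -
    ((1 - x 0) * (exp (-κ * s) * (-κ * 1)) * x s + (1 - x 0) * exp (-κ * s) * x' s)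
  have hg (s : ℝ) (hs : 0 ≤ s) : HasDerivAt g (g' s) s :=
    (((hx s hs).const_sub 1).const_mul (x 0)).sub
      ((((hasDerivAt_id' s).const_mul (-κ)).exp.const_mul (1 - x 0)).mul (hx s hs))
  have hg' (s : ℝ) (hs : 0 ≤ s) : g' s ≤ -κ * x s * g s := by
    -- `g' - (-κ x) g = -(x₀ + (1 - x₀) e^{-κs}) (x' - κ x (1 - x))`
    have hcoef : 0 ≤ x 0 + (1 - x 0) * exp (-κ * s) :=
      add_nonneg h0.1 (mul_nonneg (sub_nonneg.2 h0.2) (exp_pos _).le)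
    nlinarith [mul_le_mul_of_nonneg_left (hlog s hs) hcoef]
  have hg0 : g 0 ≤ 0 := by simp [g, mul_comm]
  have hxc : ContinuousOn x (Icc 0 t) := fun s hs => (hx s hs.1).continuousAt.continuousWithinAt
  exact sub_nonpos.1 <| image_nonpos_of_deriv_right_le_mul
    (fun s hs => (hg s hs.1).continuousAt.continuousWithinAt)
    (fun s hs => (hg s hs.1).hasDerivWithinAt) (continuousOn_const.mul hxc) hg0
    (fun s hs => hg' s hs.1) ⟨ht, le_rfl⟩

section LogisticBound

variable {x₀ y e : ℝ}

theorem pos_of_logistic_bound (h₀ : x₀ ∈ Ioc (0 : ℝ) 1) (he : 0 ≤ e)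
    (h : x₀ * (1 - y) ≤ (1 - x₀) * e * y) : 0 < y := by
  by_contra! hy
  nlinarith [mul_nonneg (mul_nonneg (sub_nonneg.2 h₀.2) he) (neg_nonneg.2 hy),
    mul_nonneg h₀.1.le (neg_nonneg.2 hy), h₀.1]

theorem le_of_logistic_bound (h₀ : x₀ ∈ Ioc (0 : ℝ) 1) (he : 0 ≤ e)
    (h : x₀ * (1 - y) ≤ (1 - x₀) * e * y) : 1 + (x₀ - 1) * e / (x₀ - (x₀ - 1) * e) ≤ y := by
  have hD : 0 < x₀ - (x₀ - 1) * e := by nlinarith [h₀.1, h₀.2]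
  have : (x₀ - 1) * e / (x₀ - (x₀ - 1) * e) ≤ y - 1 := by
    rw [div_le_iff₀ hD]
    linarith
  linarith

theorem one_sub_le_of_logistic_bound (h₀ : x₀ ∈ Ioc (0 : ℝ) 1) (he : 0 ≤ e)
    (h : x₀ * (1 - y) ≤ (1 - x₀) * e * y) : 1 - y ≤ (1 - x₀) / x₀ * e := by
  rw [div_mul_eq_mul_div, le_div_iff₀ h₀.1]
  rcases le_or_gt y 1 with hy | hy
  · nlinarith [mul_le_mul_of_nonneg_left hy (mul_nonneg (sub_nonneg.2 h₀.2) he)]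
  · nlinarith [mul_nonneg (sub_nonneg.2 h₀.2) he, h₀.1]

end LogisticBound

theorem ode_comparison_consensus (c N : ℝ) (hc : 0 < c) (hN : 0 < N)
    (T T' : ℝ → ℝ)
    (hderiv : ∀ t ≥ 0, HasDerivAt T (T' t) t)
    (h0 : T 0 ∈ Set.Ioc (2 : ℝ) 3)
    (hle3 : ∀ t ≥ 0, T t ≤ 3)
    (hineq : ∀ t ≥ 0, T' t ≥ -(4 * c / N) * (T t - 2) * (T t - 3)) :
    (∀ t ≥ 0, T t ≥ 3 + (T 0 - 3) * Real.exp (-(4 * c * t) / N) /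
        ((T 0 - 2) - (T 0 - 3) * Real.exp (-(4 * c * t) / N))) ∧
    (∀ t ≥ 0, T t ∈ Set.Ioc (2 : ℝ) 3) ∧
    (∃ C k : ℝ, 0 < k ∧ ∀ t ≥ 0, |T t - 3| ≤ C * Real.exp (-k * t)) := by
  have hx₀ : T 0 - 2 ∈ Ioc (0 : ℝ) 1 := ⟨by linarith [h0.1], by linarith [h0.2]⟩
  have hbound (t : ℝ) (ht : 0 ≤ t) :
      (T 0 - 2) * (1 - (T t - 2)) ≤ (1 - (T 0 - 2)) * exp (-(4 * c / N) * t) * (T t - 2) :=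
    logistic_comparison (x := fun s => T s - 2) (fun s hs => (hderiv s hs).sub_const 2)
      (Ioc_subset_Icc_self hx₀)
      (fun s hs => by linarith [hineq s hs, show (4 * c / N) * (T s - 2) * (1 - (T s - 2)) =
        -(4 * c / N) * (T s - 2) * (T s - 3) by ring]) ht
  refine ⟨fun t ht => ?_, fun t ht => ⟨?_, hle3 t ht⟩,
    (3 - T 0) / (T 0 - 2), 4 * c / N, by positivity, fun t ht => ?_⟩
  · have := le_of_logistic_bound hx₀ (exp_pos _).le (hbound t ht)
    rw [show T 0 - 2 - 1 = T 0 - 3 by ring, show -(4 * c / N) * t = -(4 * c * t) / N by ring]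
      at this
    linarith
  · linarith [pos_of_logistic_bound hx₀ (exp_pos _).le (hbound t ht)]
  · calc |T t - 3| = 1 - (T t - 2) := by rw [abs_of_nonpos (by linarith [hle3 t ht])]; ring
      _ ≤ (1 - (T 0 - 2)) / (T 0 - 2) * exp (-(4 * c / N) * t) :=
        one_sub_le_of_logistic_bound hx₀ (exp_pos _).le (hbound t ht)
      _ = (3 - T 0) / (T 0 - 2) * exp (-(4 * c / N) * t) := by ring
end
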